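/- arXiv:1903.05832 — 3 statements merged into one kernel-verified Lean document; each statement's English description precedes it below -/
import Mathlib

section
/- Let G be a finite simple graph, k ≥ 1 a natural number, F ⊆ V(G) with |F| ≥ 2k+1, and S ⊆ F a set of vertices each of degree less than k in G. Then there exists a set W of unordered pairs of distinct vertices of F, disjoint from E(G), with |W| ≤ ⌈(Σ_{x∈S} (k − deg_G(x)))/2⌉ + k², such that in the graph G ∪ W every vertex x ∈ S has degree at least k. -/
/-- The degree of a vertex: the number of its neighbors. -/
noncomputable def deg {V : Type*} (G : SimpleGraph V) (v : V) : ℕ :=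
  (G.neighborSet v).ncard

section Aux

open SimpleGraph Finset

variable {V : Type*} [Fintype V]

lemma deg_mono {G H : SimpleGraph V} (h : G ≤ H) (v : V) : deg G v ≤ deg H v :=
  Set.ncard_le_ncard (fun _ hw => h hw) (Set.toFinite _)

lemma deg_sup_single_left {H : SimpleGraph V} {x y : V} (hxy : x ≠ y) (h : ¬ H.Adj x y) :
    deg (H ⊔ SimpleGraph.fromEdgeSet {s(x,y)}) x = deg H x + 1 := by
  have h' : y ∉ H.neighborSet x := h
  have hns : (H ⊔ SimpleGraph.fromEdgeSet {s(x,y)}).neighborSet x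
      = insert y (H.neighborSet x) := by
    ext w
    simp only [mem_neighborSet, sup_adj, fromEdgeSet_adj, Set.mem_singleton_iff,
      Set.mem_insert_iff, Sym2.eq_iff]
    constructor
    · rintro (h1 | ⟨(⟨-, rfl⟩ | ⟨rfl, rfl⟩), h4⟩) <;> tauto
    · rintro (rfl | h1)
      · exact Or.inr ⟨by simp, hxy⟩
      · exact Or.inl h1
  rw [deg, hns, Set.ncard_insert_of_notMem h' (Set.toFinite _), deg]

lemma deg_sup_single_right {H : SimpleGraph V} {x y : V} (hxy : x ≠ y) (h : ¬ H.Adj x y) :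
    deg (H ⊔ SimpleGraph.fromEdgeSet {s(x,y)}) y = deg H y + 1 := by
  rw [show s(x,y) = s(y,x) from Sym2.eq_swap]
  exact deg_sup_single_left hxy.symm (fun hc => h hc.symm)

lemma deg_sup_single_other {H : SimpleGraph V} {x y z : V} (hzx : z ≠ x) (hzy : z ≠ y) :
    deg (H ⊔ SimpleGraph.fromEdgeSet {s(x,y)}) z = deg H z := by
  have hns : (H ⊔ SimpleGraph.fromEdgeSet {s(x,y)}).neighborSet z = H.neighborSet z := by
    ext w
    simp only [mem_neighborSet, sup_adj, fromEdgeSet_adj, Set.mem_singleton_iff,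
      Sym2.eq_iff]
    constructor
    · rintro (h1 | ⟨(⟨rfl, rfl⟩ | ⟨rfl, rfl⟩), h4⟩) <;> tauto
    · tauto
  rw [deg, hns, deg]

lemma H_insert [DecidableEq V] (G : SimpleGraph V) (W : Finset (Sym2 V)) (e : Sym2 V) :
    G ⊔ SimpleGraph.fromEdgeSet (↑(insert e W) : Set (Sym2 V))
      = (G ⊔ SimpleGraph.fromEdgeSet (↑W : Set (Sym2 V))) ⊔ SimpleGraph.fromEdgeSet {e} := by
  rw [Finset.coe_insert, Set.insert_eq, SimpleGraph.fromEdgeSet_union, sup_assoc,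
    sup_comm (SimpleGraph.fromEdgeSet {e})]

/-- Find a fresh non-neighbor inside `F` for a deficient vertex. -/
lemma exists_fresh (G : SimpleGraph V) (k : ℕ) (F : Finset V) (hF : 2 * k + 1 ≤ F.card)
    {H : SimpleGraph V} {x : V} (hx : x ∈ F) (hdeg : deg H x < k) :
    ∃ y ∈ F, y ≠ x ∧ ¬ H.Adj x y := by
  classical
  by_contra hcon
  push_neg at hcon
  have hsub : F ⊆ insert x (H.neighborSet x).toFinset := by
    intro y hy
    rcases eq_or_ne y x with rfl | hne
    · exact Finset.mem_insert_self _ _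
    · exact Finset.mem_insert_of_mem (Set.mem_toFinset.2 (hcon y hy hne))
  have hcard := Finset.card_le_card hsub
  have h2 : (insert x (H.neighborSet x).toFinset).card ≤ (H.neighborSet x).toFinset.card + 1 :=
    Finset.card_insert_le _ _
  have h3 : (H.neighborSet x).toFinset.card = deg H x :=
    (Set.ncard_eq_toFinset_card' _).symm
  omega

/-- Endgame lemma: always finish by adding at most (total deficiency) many edges,
one at a time. -/
lemma endgame (G : SimpleGraph V) (k : ℕ) (F S : Finset V)
    (hF : 2 * k + 1 ≤ F.card) (hSF : S ⊆ F) :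
    ∀ n (W : Finset (Sym2 V)),
      (∀ e ∈ W, ¬ e.IsDiag) → (∀ e ∈ W, ∀ v ∈ e, v ∈ F) → (∀ e ∈ W, e ∉ G.edgeSet) →
      (∑ x ∈ S, (k - deg (G ⊔ SimpleGraph.fromEdgeSet (↑W : Set (Sym2 V))) x)) ≤ n →
      ∃ W' : Finset (Sym2 V), W ⊆ W' ∧
        (∀ e ∈ W', ¬ e.IsDiag) ∧ (∀ e ∈ W', ∀ v ∈ e, v ∈ F) ∧ (∀ e ∈ W', e ∉ G.edgeSet) ∧
        W'.card ≤ W.card +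
          (∑ x ∈ S, (k - deg (G ⊔ SimpleGraph.fromEdgeSet (↑W : Set (Sym2 V))) x)) ∧
        ∀ x ∈ S, k ≤ deg (G ⊔ SimpleGraph.fromEdgeSet (↑W' : Set (Sym2 V))) x := by
  classical
  intro n
  induction n with
  | zero =>
    intro W h1 h2 h3 hD
    refine ⟨W, Finset.Subset.refl _, h1, h2, h3, by omega, ?_⟩
    intro x hx
    have := Finset.sum_eq_zero_iff.1 (Nat.le_zero.1 hD) x hx
    omega
  | succ n ih =>
    intro W h1 h2 h3 hD
    set H := G ⊔ SimpleGraph.fromEdgeSet (↑W : Set (Sym2 V)) with hHdef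
    by_cases hD0 : (∑ x ∈ S, (k - deg H x)) = 0
    · refine ⟨W, Finset.Subset.refl _, h1, h2, h3, by omega, ?_⟩
      intro x hx
      have := Finset.sum_eq_zero_iff.1 hD0 x hx
      rw [← hHdef]
      omega
    · obtain ⟨x, hxS, hxne⟩ := Finset.exists_ne_zero_of_sum_ne_zero hD0
      have hxdef : deg H x < k := by omega
      obtain ⟨y, hyF, hyx, hAdj⟩ := exists_fresh G k F hF (hSF hxS) hxdef
      set e : Sym2 V := s(x,y) with hedef
      have heW : e ∉ W := by
        intro hmem
        exact hAdj (Or.inr ((SimpleGraph.fromEdgeSet_adj _).2 ⟨Finset.mem_coe.2 hmem, hyx.symm⟩))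
      have hGle : G ≤ H := le_sup_left
      have hkey : G ⊔ SimpleGraph.fromEdgeSet (↑(insert e W) : Set (Sym2 V))
          = H ⊔ SimpleGraph.fromEdgeSet {e} := H_insert G W e
      -- the new deficiency drops by at least 1
      have hdrop : (∑ z ∈ S, (k - deg (H ⊔ SimpleGraph.fromEdgeSet {e}) z)) + 1
          ≤ ∑ z ∈ S, (k - deg H z) := by
        have hx' : deg (H ⊔ SimpleGraph.fromEdgeSet {e}) x = deg H x + 1 :=
          deg_sup_single_left hyx.symm hAdj
        rw [← Finset.add_sum_erase _ _ hxS, ← Finset.add_sum_erase _ _ hxS, hx']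
        have hrest : ∑ z ∈ S.erase x, (k - deg (H ⊔ SimpleGraph.fromEdgeSet {e}) z)
            ≤ ∑ z ∈ S.erase x, (k - deg H z) :=
          Finset.sum_le_sum fun z _ =>
            Nat.sub_le_sub_left (deg_mono le_sup_left z) k
        omega
      have h1' : ∀ f ∈ insert e W, ¬ f.IsDiag := by
        intro f hf
        rcases Finset.mem_insert.1 hf with rfl | hf
        · simpa [hedef] using hyx.symm
        · exact h1 f hf
      have h2' : ∀ f ∈ insert e W, ∀ v ∈ f, v ∈ F := by
        intro f hf v hv
        rcases Finset.mem_insert.1 hf with rfl | hf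
        · rcases Sym2.mem_iff.1 hv with rfl | rfl
          · exact hSF hxS
          · exact hyF
        · exact h2 f hf v hv
      have h3' : ∀ f ∈ insert e W, f ∉ G.edgeSet := by
        intro f hf
        rcases Finset.mem_insert.1 hf with rfl | hf
        · intro hc
          exact hAdj (hGle ((SimpleGraph.mem_edgeSet _).1 hc))
        · exact h3 f hf
      obtain ⟨W', hsub, g1, g2, g3, gcard, gdeg⟩ := ih (insert e W) h1' h2' h3' (by
        rw [hkey]; omega)
      refine ⟨W', (Finset.subset_insert e W).trans hsub, g1, g2, g3, ?_, gdeg⟩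
      rw [hkey] at gcard
      rw [Finset.card_insert_of_notMem heW] at gcard
      omega

/-- Pairing lemma: finish by adding at most `D/2 + k²` edges. -/
lemma pairing (G : SimpleGraph V) (k : ℕ) (F S : Finset V)
    (hF : 2 * k + 1 ≤ F.card) (hSF : S ⊆ F) :
    ∀ n (W : Finset (Sym2 V)),
      (∀ e ∈ W, ¬ e.IsDiag) → (∀ e ∈ W, ∀ v ∈ e, v ∈ F) → (∀ e ∈ W, e ∉ G.edgeSet) →
      (∑ x ∈ S, (k - deg (G ⊔ SimpleGraph.fromEdgeSet (↑W : Set (Sym2 V))) x)) ≤ n →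
      ∃ W' : Finset (Sym2 V), W ⊆ W' ∧
        (∀ e ∈ W', ¬ e.IsDiag) ∧ (∀ e ∈ W', ∀ v ∈ e, v ∈ F) ∧ (∀ e ∈ W', e ∉ G.edgeSet) ∧
        W'.card ≤ W.card +
          (∑ x ∈ S, (k - deg (G ⊔ SimpleGraph.fromEdgeSet (↑W : Set (Sym2 V))) x)) / 2
          + k ^ 2 ∧
        ∀ x ∈ S, k ≤ deg (G ⊔ SimpleGraph.fromEdgeSet (↑W' : Set (Sym2 V))) x := by
  classical
  intro n
  induction n with
  | zero =>
    intro W h1 h2 h3 hD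
    refine ⟨W, Finset.Subset.refl _, h1, h2, h3, by omega, ?_⟩
    intro x hx
    have := Finset.sum_eq_zero_iff.1 (Nat.le_zero.1 hD) x hx
    omega
  | succ n ih =>
    intro W h1 h2 h3 hD
    set H := G ⊔ SimpleGraph.fromEdgeSet (↑W : Set (Sym2 V)) with hHdef
    by_cases hD0 : (∑ x ∈ S, (k - deg H x)) = 0
    · refine ⟨W, Finset.Subset.refl _, h1, h2, h3, by omega, ?_⟩
      intro x hx
      have := Finset.sum_eq_zero_iff.1 hD0 x hx
      rw [← hHdef]
      omega
    · have hGle : G ≤ H := le_sup_left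
      by_cases hpair : ∃ x ∈ S, ∃ y ∈ S, deg H x < k ∧ deg H y < k ∧ x ≠ y ∧ ¬ H.Adj x y
      · -- Case 1: pair two deficient vertices
        obtain ⟨x, hxS, y, hyS, hxd, hyd, hxy, hAdj⟩ := hpair
        set e : Sym2 V := s(x,y) with hedef
        have heW : e ∉ W := by
          intro hmem
          exact hAdj (Or.inr ((SimpleGraph.fromEdgeSet_adj _).2 ⟨Finset.mem_coe.2 hmem, hxy⟩))
        have hkey : G ⊔ SimpleGraph.fromEdgeSet (↑(insert e W) : Set (Sym2 V))
            = H ⊔ SimpleGraph.fromEdgeSet {e} := H_insert G W e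
        -- the new deficiency drops by exactly 2
        have hdrop : (∑ z ∈ S, (k - deg (H ⊔ SimpleGraph.fromEdgeSet {e}) z)) + 2
            = ∑ z ∈ S, (k - deg H z) := by
          have hx' : deg (H ⊔ SimpleGraph.fromEdgeSet {e}) x = deg H x + 1 :=
            deg_sup_single_left hxy hAdj
          have hy' : deg (H ⊔ SimpleGraph.fromEdgeSet {e}) y = deg H y + 1 :=
            deg_sup_single_right hxy hAdj
          have hyS' : y ∈ S.erase x := Finset.mem_erase.2 ⟨hxy.symm, hyS⟩
          rw [← Finset.add_sum_erase _ _ hxS, ← Finset.add_sum_erase _ _ hxS,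
            ← Finset.add_sum_erase _ _ hyS', ← Finset.add_sum_erase _ _ hyS',
            hx', hy']
          have hrest : ∑ z ∈ (S.erase x).erase y,
              (k - deg (H ⊔ SimpleGraph.fromEdgeSet {e}) z)
              = ∑ z ∈ (S.erase x).erase y, (k - deg H z) := by
            refine Finset.sum_congr rfl fun z hz => ?_
            have hz' := Finset.mem_erase.1 hz
            have hz'' := Finset.mem_erase.1 hz'.2
            rw [deg_sup_single_other hz''.1 hz'.1]
          omega
        have h1' : ∀ f ∈ insert e W, ¬ f.IsDiag := by
          intro f hf
          rcases Finset.mem_insert.1 hf with rfl | hf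
          · simpa [hedef] using hxy
          · exact h1 f hf
        have h2' : ∀ f ∈ insert e W, ∀ v ∈ f, v ∈ F := by
          intro f hf v hv
          rcases Finset.mem_insert.1 hf with rfl | hf
          · rcases Sym2.mem_iff.1 hv with rfl | rfl
            · exact hSF hxS
            · exact hSF hyS
          · exact h2 f hf v hv
        have h3' : ∀ f ∈ insert e W, f ∉ G.edgeSet := by
          intro f hf
          rcases Finset.mem_insert.1 hf with rfl | hf
          · intro hc
            exact hAdj (hGle ((SimpleGraph.mem_edgeSet _).1 hc))
          · exact h3 f hf
        obtain ⟨W', hsub, g1, g2, g3, gcard, gdeg⟩ := ih (insert e W) h1' h2' h3' (by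
          rw [hkey]; omega)
        refine ⟨W', (Finset.subset_insert e W).trans hsub, g1, g2, g3, ?_, gdeg⟩
        rw [hkey] at gcard
        rw [Finset.card_insert_of_notMem heW] at gcard
        omega
      · -- Case 2: deficient vertices form a clique; total deficiency ≤ k²
        push_neg at hpair
        set S' := S.filter (fun z => deg H z < k) with hS'def
        obtain ⟨x₀, hx₀S, hx₀ne⟩ := Finset.exists_ne_zero_of_sum_ne_zero hD0
        have hx₀d : deg H x₀ < k := by omega
        have hx₀S' : x₀ ∈ S' := Finset.mem_filter.2 ⟨hx₀S, hx₀d⟩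
        have hclique : S'.erase x₀ ⊆ (H.neighborSet x₀).toFinset := by
          intro z hz
          have hz' := Finset.mem_erase.1 hz
          have hzS' := Finset.mem_filter.1 hz'.2
          exact Set.mem_toFinset.2
            (hpair x₀ hx₀S z hzS'.1 hx₀d hzS'.2 (Ne.symm hz'.1))
        have hcard' : S'.card ≤ k := by
          have h1c := Finset.card_le_card hclique
          have h2c : (H.neighborSet x₀).toFinset.card = deg H x₀ :=
            (Set.ncard_eq_toFinset_card' _).symm
          have h3c : S'.card - 1 ≤ (S'.erase x₀).card := by
            rw [Finset.card_erase_of_mem hx₀S']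
          have h4c : 1 ≤ S'.card := Finset.card_pos.2 ⟨x₀, hx₀S'⟩
          omega
        have hDsmall : (∑ z ∈ S, (k - deg H z)) ≤ k ^ 2 := by
          have heq : ∑ z ∈ S', (k - deg H z) = ∑ z ∈ S, (k - deg H z) := by
            refine Finset.sum_filter_of_ne fun z _ hne => ?_
            omega
          have hle : ∑ z ∈ S', (k - deg H z) ≤ ∑ z ∈ S', k :=
            Finset.sum_le_sum fun z _ => Nat.sub_le _ _
          rw [Finset.sum_const, smul_eq_mul] at hle
          have : S'.card * k ≤ k * k := Nat.mul_le_mul_right k hcard'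
          rw [pow_two]
          omega
        obtain ⟨W', hsub, g1, g2, g3, gcard, gdeg⟩ :=
          endgame G k F S hF hSF (∑ z ∈ S, (k - deg H z)) W h1 h2 h3 le_rfl
        refine ⟨W', hsub, g1, g2, g3, ?_, gdeg⟩
        rw [← hHdef] at gcard
        omega

end Aux

/-- Achievability bound for Theorem 1: if `|F| ≥ 2k+1` and every vertex of `S ⊆ F` has
degree `< k`, one can add at most `⌈(Σ_{x∈S}(k − deg_G(x)))/2⌉ + k²` non-edges between
distinct vertices of `F` so that every vertex of `S` gets degree at least `k`. -/
theorem stmt_4 {V : Type*} [Fintype V] (G : SimpleGraph V) (k : ℕ) (hk : 1 ≤ k)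
    (F : Finset V) (hF : 2 * k + 1 ≤ F.card)
    (S : Finset V) (hSF : S ⊆ F) (hSdeg : ∀ x ∈ S, deg G x < k) :
    ∃ W : Finset (Sym2 V),
      (∀ e ∈ W, ¬ e.IsDiag) ∧
      (∀ e ∈ W, ∀ v ∈ e, v ∈ F) ∧
      (∀ e ∈ W, e ∉ G.edgeSet) ∧
      W.card ≤ (∑ x ∈ S, (k - deg G x) + 1) / 2 + k ^ 2 ∧
      (∀ x ∈ S,
        k ≤ deg (G ⊔ SimpleGraph.fromEdgeSet (↑W : Set (Sym2 V))) x) := by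
  classical
  have hempty : G ⊔ SimpleGraph.fromEdgeSet (↑(∅ : Finset (Sym2 V)) : Set (Sym2 V)) = G := by
    simp [SimpleGraph.fromEdgeSet_empty]
  obtain ⟨W', hsub, g1, g2, g3, gcard, gdeg⟩ :=
    pairing G k F S hF hSF
      (∑ x ∈ S, (k - deg (G ⊔ SimpleGraph.fromEdgeSet
        (↑(∅ : Finset (Sym2 V)) : Set (Sym2 V))) x))
      ∅ (by simp) (by simp) (by simp) le_rfl
  rw [hempty] at gcard
  refine ⟨W', g1, g2, g3, ?_, gdeg⟩
  rw [Finset.card_empty] at gcard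
  omega
end

section
/- Let G be a finite simple graph on n vertices, k ≥ 1 an integer, and m a natural number such that every set of k vertices of G spans at most m edges of G. Let H(G,k) be the associated graph of the reduction. Then for every set W of unordered pairs of distinct followers of H(G,k), disjoint from E(H(G,k)), and every k-element set K ⊆ V(G) such that every a_v with v ∈ K has degree at least n+k−1 in the graph H(G,k) ∪ W, it holds that |W| ≥ k(k−1) − m. -/
/-- The generating relation of the reduction graph `H(G,k)`: vertices are `a_v = Sum.inl v`,
`d_{v,ℓ} = Sum.inr (Sum.inl (v,ℓ))` and leaders `x_i = Sum.inr (Sum.inr i)`; `a_u ~ a_v`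
iff `{u,v}` is a non-edge of `G`, the leaders form a clique, and `a_v ~ d_{v,ℓ}` for
`ℓ ∈ [deg_G(v)+1]`. -/
def hRel {V : Type*} (G : SimpleGraph V) (n k : ℕ) :
    (V ⊕ (V × Fin n) ⊕ Fin (n + k)) → (V ⊕ (V × Fin n) ⊕ Fin (n + k)) → Prop
  | Sum.inl u, Sum.inl v => ¬ G.Adj u v
  | Sum.inl v, Sum.inr (Sum.inl (w, ℓ)) => v = w ∧ (ℓ : ℕ) < deg G v + 1
  | Sum.inr (Sum.inr _), Sum.inr (Sum.inr _) => True
  | _, _ => False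

/-- The reduction graph `H(G,k)`. -/
def Hgraph {V : Type*} (G : SimpleGraph V) (n k : ℕ) :
    SimpleGraph (V ⊕ (V × Fin n) ⊕ Fin (n + k)) :=
  SimpleGraph.fromRel (hRel G n k)

/-- Followers of `H(G,k)`: every vertex except the leaders `x_i`. -/
def isFollowerH {V : Type*} {n k : ℕ} : (V ⊕ (V × Fin n) ⊕ Fin (n + k)) → Prop
  | Sum.inr (Sum.inr _) => False
  | _ => True

open Finset

section Degree

variable {V : Type*}

lemma deg_sup_le (G H : SimpleGraph V) (v : V) : deg (G ⊔ H) v ≤ deg G v + deg H v := by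
  unfold deg
  rw [SimpleGraph.neighborSet_sup]
  exact Set.ncard_union_le _ _

lemma deg_fromEdgeSet_le (W : Set (Sym2 V)) (hW : W.Finite) (x : V) :
    deg (SimpleGraph.fromEdgeSet W) x ≤ {e ∈ W | x ∈ e}.ncard :=
  Set.ncard_le_ncard_of_injOn (fun y => s(x, y))
    (fun _ hy => ⟨((SimpleGraph.fromEdgeSet_adj W).mp hy).1, Sym2.mem_mk_left _ _⟩)
    (fun _ _ _ _ h => Sym2.congr_right.mp h) (hW.subset fun _ he => he.1)

end Degree

section Reduction

variable {V : Type*} (G : SimpleGraph V) (n k : ℕ)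

lemma Hgraph_adj_inl_inl {u w : V} :
    (Hgraph G n k).Adj (Sum.inl u) (Sum.inl w) ↔ u ≠ w ∧ ¬ G.Adj u w := by
  simp only [Hgraph, SimpleGraph.fromRel_adj, hRel, ne_eq, Sum.inl.injEq, G.adj_comm w u,
    or_self]

lemma deg_Hgraph_inl_le [Fintype V] (v : V) :
    deg (Hgraph G n k) (Sum.inl v) ≤ Fintype.card V := by
  set s := insert v (G.neighborSet v)
  have hsub : (Hgraph G n k).neighborSet (Sum.inl v) ⊆ Sum.inl '' sᶜ ∪
      (fun ℓ => Sum.inr (Sum.inl (v, ℓ))) '' {ℓ : Fin n | (ℓ : ℕ) < deg G v + 1} := by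
    rintro (u | ⟨w, ℓ⟩ | i) hy <;>
      simp only [SimpleGraph.mem_neighborSet, Hgraph, SimpleGraph.fromRel_adj, hRel] at hy
    · rw [G.adj_comm u v, or_self] at hy
      refine Or.inl ⟨u, ?_, rfl⟩
      simp only [s, Set.mem_compl_iff, Set.mem_insert_iff, SimpleGraph.mem_neighborSet, not_or]
      exact ⟨fun h => hy.1 (h ▸ rfl), hy.2⟩
    · obtain ⟨rfl, hℓ⟩ := hy.2.resolve_right id
      exact Or.inr ⟨ℓ, hℓ, rfl⟩
    · simp at hy
  have hs : s.ncard = deg G v + 1 := Set.ncard_insert_of_notMem G.notMem_neighborSet_self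
  have hval : {ℓ : Fin n | (ℓ : ℕ) < deg G v + 1}.ncard ≤ deg G v + 1 := by
    calc _ ≤ (Set.Iio (deg G v + 1)).ncard :=
          Set.ncard_le_ncard_of_injOn Fin.val (fun _ h => h) Fin.val_injective.injOn
      _ = deg G v + 1 := by simp
  calc deg (Hgraph G n k) (Sum.inl v)
      ≤ (Sum.inl '' sᶜ).ncard + ((fun ℓ => Sum.inr (Sum.inl (v, ℓ))) ''
          {ℓ : Fin n | (ℓ : ℕ) < deg G v + 1}).ncard :=
        (Set.ncard_le_ncard hsub).trans (Set.ncard_union_le _ _)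
    _ ≤ sᶜ.ncard + s.ncard := by
        gcongr
        · exact Set.ncard_image_le
        · exact (Set.ncard_image_le).trans (hs ▸ hval)
    _ = Fintype.card V := by rw [add_comm, Set.ncard_add_ncard_compl, Nat.card_eq_fintype_card]

end Reduction

section DoubleCounting

variable {α β : Type*} [DecidableEq β] {f : α → β}

lemma card_filter_apply_mem_le_two (hf : f.Injective) (K : Finset α) (e : Sym2 β) :
    #{v ∈ K | f v ∈ e} ≤ 2 := by
  induction e using Sym2.ind with
  | _ x y =>
    calc #{v ∈ K | f v ∈ s(x, y)}
        ≤ #({x, y} : Finset β) := card_le_card_of_injOn f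
          (fun v hv => by simpa [Sym2.mem_iff] using (mem_filter.mp hv).2) hf.injOn
      _ ≤ 2 := card_le_two

lemma exists_pair_of_two_le_card_filter (hf : f.Injective) (K : Finset α) {e : Sym2 β}
    (h : 2 ≤ #{v ∈ K | f v ∈ e}) : ∃ u ∈ K, ∃ w ∈ K, u ≠ w ∧ e = s(f u, f w) := by
  obtain ⟨u, hu, w, hw, huw⟩ := one_lt_card.mp h
  rw [mem_filter] at hu hw
  exact ⟨u, hu.1, w, hw.1, huw, (Sym2.mem_and_mem_iff (hf.ne huw)).mp ⟨hu.2, hw.2⟩⟩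

lemma sum_card_filter_apply_mem_le [DecidableEq α] (hf : f.Injective) (K : Finset α)
    (F : Finset (Sym2 β)) :
    ∑ v ∈ K, #{e ∈ F | f v ∈ e} ≤
      #F + #{e ∈ F | ∃ u ∈ K, ∃ w ∈ K, u ≠ w ∧ e = s(f u, f w)} := by
  calc ∑ v ∈ K, #{e ∈ F | f v ∈ e} = ∑ e ∈ F, #{v ∈ K | f v ∈ e} := by
        simp only [card_filter]
        exact sum_comm
    _ ≤ ∑ e ∈ F, (1 + if ∃ u ∈ K, ∃ w ∈ K, u ≠ w ∧ e = s(f u, f w) then 1 else 0) := by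
        refine sum_le_sum fun e _ => ?_
        have := card_filter_apply_mem_le_two hf K e
        split_ifs with h
        · omega
        · have := mt (exists_pair_of_two_le_card_filter hf K) h
          omega
    _ = #F + #{e ∈ F | ∃ u ∈ K, ∃ w ∈ K, u ≠ w ∧ e = s(f u, f w)} := by
        rw [sum_add_distrib, card_filter, sum_const, smul_eq_mul, mul_one]

lemma card_filter_eq_pair_le_ncard_edges [DecidableEq α] [Finite α] (G : SimpleGraph α)
    (K : Finset α) (F : Finset (Sym2 β)) (hG : ∀ u w, u ≠ w → s(f u, f w) ∈ F → G.Adj u w) :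
    #{e ∈ F | ∃ u ∈ K, ∃ w ∈ K, u ≠ w ∧ e = s(f u, f w)} ≤
      {e ∈ G.edgeSet | ∀ v ∈ e, v ∈ K}.ncard := by
  rw [← Set.ncard_coe_finset]
  calc _ ≤ (Sym2.map f '' {e ∈ G.edgeSet | ∀ v ∈ e, v ∈ K}).ncard := by
        refine Set.ncard_le_ncard ?_ ((Set.toFinite _).image _)
        intro e he
        obtain ⟨heF, u, hu, w, hw, huw, rfl⟩ := mem_filter.mp he
        refine ⟨s(u, w), ⟨hG u w huw heF, ?_⟩, rfl⟩
        rintro v hv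
        rcases Sym2.mem_iff.mp hv with rfl | rfl <;> assumption
    _ ≤ _ := Set.ncard_image_le (Set.toFinite _)

end DoubleCounting

theorem stmt_7_general {V : Type*} [Fintype V] [DecidableEq V] (G : SimpleGraph V)
    (k : ℕ) (n : ℕ) (hn : n = Fintype.card V) (m : ℕ)
    (hdense : ∀ K : Finset V, K.card = k →
      {e : Sym2 V | e ∈ G.edgeSet ∧ ∀ v ∈ e, v ∈ K}.ncard ≤ m)
    (W : Set (Sym2 (V ⊕ (V × Fin n) ⊕ Fin (n + k)))) (hWfin : W.Finite)
    (hnew : ∀ e ∈ W, e ∉ (Hgraph G n k).edgeSet)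
    (K : Finset V) (hKcard : K.card = k)
    (hdeg : ∀ v ∈ K,
      n + k - 1 ≤ deg (Hgraph G n k ⊔ SimpleGraph.fromEdgeSet W) (Sum.inl v)) :
    k * (k - 1) - m ≤ W.ncard := by
  subst hn
  set F := hWfin.toFinset
  have hincident : ∀ v ∈ K, k - 1 ≤ #{e ∈ F | Sum.inl v ∈ e} := by
    intro v hv
    have hF : {e ∈ W | Sum.inl v ∈ e}.ncard = #{e ∈ F | Sum.inl v ∈ e} := by
      rw [← Set.ncard_coe_finset, coe_filter]
      simp only [F, Set.Finite.mem_toFinset]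
    have := hdeg v hv
    have := deg_sup_le (Hgraph G _ k) (SimpleGraph.fromEdgeSet W) (Sum.inl v)
    have := deg_Hgraph_inl_le G (Fintype.card V) k v
    have := deg_fromEdgeSet_le W hWfin (Sum.inl v)
    omega
  have hpairs : #{e ∈ F | ∃ u ∈ K, ∃ w ∈ K, u ≠ w ∧ e = s(Sum.inl u, Sum.inl w)} ≤ m := by
    refine (card_filter_eq_pair_le_ncard_edges G K F fun u w huw he => ?_).trans
      (hdense K hKcard)
    have := hnew _ (hWfin.mem_toFinset.mp he)
    rw [SimpleGraph.mem_edgeSet, Hgraph_adj_inl_inl] at this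
    tauto
  have hcount : k * (k - 1) ≤ W.ncard + m := calc
    k * (k - 1) = ∑ _v ∈ K, (k - 1) := by rw [sum_const, hKcard, smul_eq_mul]
    _ ≤ ∑ v ∈ K, #{e ∈ F | Sum.inl v ∈ e} := sum_le_sum hincident
    _ ≤ #F + m := (sum_card_filter_apply_mem_le Sum.inl_injective K F).trans (by omega)
    _ = W.ncard + m := by rw [Set.ncard_eq_toFinset_card _ hWfin]
  omega

/-- Soundness of the Densest-k-Subgraph reduction: if every `k`-set of vertices of `G`
spans at most `m` edges, then any set `W` of added non-edges between distinct followers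
of `H(G,k)` that raises the degrees of all `a_v`, `v ∈ K` (`|K| = k`) to at least `n+k−1`
satisfies `|W| ≥ k(k−1) − m`. -/
theorem stmt_7 {V : Type*} [Fintype V] [DecidableEq V] (G : SimpleGraph V)
    (k : ℕ) (hk : 1 ≤ k) (n : ℕ) (hn : n = Fintype.card V) (m : ℕ)
    (hdense : ∀ K : Finset V, K.card = k →
      {e : Sym2 V | e ∈ G.edgeSet ∧ ∀ v ∈ e, v ∈ K}.ncard ≤ m)
    (W : Set (Sym2 (V ⊕ (V × Fin n) ⊕ Fin (n + k)))) (hWfin : W.Finite)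
    (hdiag : ∀ e ∈ W, ¬ e.IsDiag)
    (hfol : ∀ e ∈ W, ∀ z ∈ e, isFollowerH z)
    (hnew : ∀ e ∈ W, e ∉ (Hgraph G n k).edgeSet)
    (K : Finset V) (hKcard : K.card = k)
    (hdeg : ∀ v ∈ K,
      n + k - 1 ≤ deg (Hgraph G n k ⊔ SimpleGraph.fromEdgeSet W) (Sum.inl v)) :
    k * (k - 1) - m ≤ W.ncard :=
  stmt_7_general G k n hn m hdense W hWfin hnew K hKcard hdeg
end

section
/- Let h ≥ 3, p ≥ 2, m ≥ 0 with (h−2)(p−1) ≥ 2, and let g assign to each ℓ ∈ [m] and each i ∈ [h] an index g(ℓ,i) ∈ [p]. In the captain network G_M(h,p,m,g), the core number of every captain C_{i,j} is strictly greater than the core number of every leader l_{i'}. -/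
/-- The core number of a vertex `v`: the largest `k` such that `v` belongs to a subgraph
in which every vertex has degree at least `k` within that subgraph (equivalently, an
induced subgraph with minimum degree at least `k`). -/
noncomputable def coreNumber {V : Type*} (G : SimpleGraph V) (v : V) : ℕ :=
  sSup {k : ℕ | ∃ s : Set V, v ∈ s ∧ ∀ w ∈ s, k ≤ (s ∩ G.neighborSet w).ncard}

/-- Vertices of the captain network with `h` leaders, `h` groups of `p` captains,
and `m` remaining vertices. -/
inductive CNV (h p m : ℕ) where
  | L : Fin h → CNV h p m
  | C : Fin h → Fin p → CNV h p m
  | X : Fin m → CNV h p m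

/-- Generating relation of the captain network `G_M(h,p,m,g)`: the leaders form a clique,
leader `l_i` is joined to all captains of its group `C_i`, the captains form a complete
`h`-partite graph (the groups being the parts), and `x_ℓ` is joined to the captain
`C_{i,g(ℓ,i)}` of each group `i`. -/
def cnRel {h p m : ℕ} (g : Fin m → Fin h → Fin p) : CNV h p m → CNV h p m → Prop
  | .L i, .L i' => i ≠ i'
  | .L i, .C i' _ => i = i'
  | .C i _, .C i' _ => i ≠ i'
  | .X ℓ, .C i j => j = g ℓ i
  | _, _ => False

/-- The captain network `G_M(h,p,m,g)` for multiple leaders. -/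
def captainNetwork {h p m : ℕ} (g : Fin m → Fin h → Fin p) : SimpleGraph (CNV h p m) :=
  SimpleGraph.fromRel (cnRel g)

/-!
A leader's core number is at most its degree `(h - 1) + p`. The captains alone induce a
complete `h`-partite graph with parts of size `p`, in which every captain has degree
`(h - 1) * p`, so every captain's core number is at least that. The hypothesis
`2 ≤ (h - 2) * (p - 1)` makes the second bound exceed the first, since
`(h - 1) * p = (h - 2) * (p - 1) + h + p - 2`.
-/

section coreNumber

variable {V : Type*} [Finite V] (G : SimpleGraph V) (v : V)

lemma coreNumber_le_ncard_neighborSet : coreNumber G v ≤ (G.neighborSet v).ncard :=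
  csSup_le' fun _ ⟨s, hv, hs⟩ => (hs v hv).trans (Set.ncard_inter_le_ncard_right _ _)

lemma le_coreNumber {k : ℕ} (s : Set V) (hv : v ∈ s)
    (hs : ∀ w ∈ s, k ≤ (s ∩ G.neighborSet w).ncard) : k ≤ coreNumber G v := by
  refine le_csSup ⟨Nat.card V, ?_⟩ ⟨s, hv, hs⟩
  rintro k ⟨t, hvt, hk⟩
  exact (hk v hvt).trans ((Set.ncard_le_ncard (Set.subset_univ _)).trans (Set.ncard_univ V).le)

end coreNumber

lemma Fin.ncard_compl_singleton {n : ℕ} (i : Fin n) : ({i}ᶜ : Set (Fin n)).ncard = n - 1 := by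
  rw [Set.ncard_compl, Set.ncard_singleton, Nat.card_eq_fintype_card, Fintype.card_fin]

namespace CNV

def equivSum (h p m : ℕ) : CNV h p m ≃ Fin h ⊕ (Fin h × Fin p) ⊕ Fin m where
  toFun
    | .L i => .inl i
    | .C i j => .inr (.inl (i, j))
    | .X ℓ => .inr (.inr ℓ)
  invFun
    | .inl i => .L i
    | .inr (.inl (i, j)) => .C i j
    | .inr (.inr ℓ) => .X ℓ
  left_inv v := by cases v <;> rfl
  right_inv v := by rcases v with i | ⟨i, j⟩ | ℓ <;> rfl

instance {h p m : ℕ} : Finite (CNV h p m) := Finite.of_equiv _ (equivSum h p m).symm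

lemma injective_L {h p m : ℕ} : Function.Injective (L : Fin h → CNV h p m) :=
  fun _ _ h => L.inj h

lemma injective_C {h p m : ℕ} (i : Fin h) : Function.Injective (C i : Fin p → CNV h p m) :=
  fun _ _ h => (C.inj h).2

lemma injective_uncurry_C {h p m : ℕ} :
    Function.Injective (Function.uncurry C : Fin h × Fin p → CNV h p m) :=
  fun ⟨_, _⟩ ⟨_, _⟩ h => Prod.ext (C.inj h).1 (C.inj h).2

end CNV

section captainNetwork

open CNV

variable {h p m : ℕ} (g : Fin m → Fin h → Fin p)

lemma captainNetwork_neighborSet_L (i : Fin h) :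
    (captainNetwork g).neighborSet (L i) = L '' {i}ᶜ ∪ Set.range (C i) := by
  ext (w | w | w) <;> simp [captainNetwork, cnRel, eq_comm]

lemma captains_inter_captainNetwork_neighborSet_C (i : Fin h) (j : Fin p) :
    Set.range (Function.uncurry C) ∩ (captainNetwork g).neighborSet (C i j) =
      Function.uncurry C '' ({i}ᶜ ×ˢ Set.univ) := by
  ext (w | ⟨a, b⟩ | w) <;> simp [captainNetwork, cnRel, eq_comm]
  exact fun hia hai => absurd hai hia

lemma coreNumber_L_le (i : Fin h) : coreNumber (captainNetwork g) (L i) ≤ h - 1 + p := by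
  refine (coreNumber_le_ncard_neighborSet _ _).trans ?_
  rw [captainNetwork_neighborSet_L]
  refine (Set.ncard_union_le _ _).trans_eq ?_
  rw [Set.ncard_image_of_injective _ injective_L, Set.ncard_range_of_injective (injective_C i),
    Fin.ncard_compl_singleton, Nat.card_eq_fintype_card, Fintype.card_fin]

lemma sub_one_mul_le_coreNumber_C (i : Fin h) (j : Fin p) :
    (h - 1) * p ≤ coreNumber (captainNetwork g) (C i j) := by
  refine le_coreNumber _ _ (Set.range (Function.uncurry C)) ⟨(i, j), rfl⟩ ?_
  rintro _ ⟨⟨a, b⟩, rfl⟩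
  rw [Function.uncurry_apply_pair, captains_inter_captainNetwork_neighborSet_C,
    Set.ncard_image_of_injective _ injective_uncurry_C, Set.ncard_prod,
    Fin.ncard_compl_singleton, Set.ncard_univ, Nat.card_eq_fintype_card, Fintype.card_fin]

end captainNetwork

lemma Nat.sub_one_add_lt_sub_one_mul {h p : ℕ} (hcond : 2 ≤ (h - 2) * (p - 1)) :
    h - 1 + p < (h - 1) * p := by
  obtain ⟨h2, p1⟩ : 0 < h - 2 ∧ 0 < p - 1 := CanonicallyOrderedAdd.mul_pos.mp (by omega)
  zify [(by omega : 2 ≤ h), (by omega : 1 ≤ h), (by omega : 1 ≤ p)] at hcond ⊢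
  nlinarith

theorem stmt_16_general {h p m : ℕ}
    (hcond : 2 ≤ (h - 2) * (p - 1))
    (g : Fin m → Fin h → Fin p) :
    ∀ (i i' : Fin h) (j : Fin p),
      coreNumber (captainNetwork g) (CNV.L i') <
      coreNumber (captainNetwork g) (CNV.C i j) := fun i i' j =>
  (coreNumber_L_le g i').trans_lt <|
    (Nat.sub_one_add_lt_sub_one_mul hcond).trans_le (sub_one_mul_le_coreNumber_C g i j)

/-- Strict hiding in captain networks: if `h ≥ 3`, `p ≥ 2` and `(h−2)(p−1) ≥ 2`, then in
the captain network the core number of every captain is strictly greater than the core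
number of every leader. -/
theorem stmt_16 {h p m : ℕ} (hh : 3 ≤ h) (hp : 2 ≤ p)
    (hcond : 2 ≤ (h - 2) * (p - 1))
    (g : Fin m → Fin h → Fin p) :
    ∀ (i i' : Fin h) (j : Fin p),
      coreNumber (captainNetwork g) (CNV.L i') <
      coreNumber (captainNetwork g) (CNV.C i j) :=
  stmt_16_general hcond g
end
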